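/- arXiv:2403.20000 — 2 statements merged into one kernel-verified Lean document; each statement's English description precedes it below -/
import Mathlib

section
/- Let A be a finite set, let ĉ : A → ℝ and Δ : A → ℝ satisfy ĉ_e ≥ 0 and Δ_e ≥ 0 for all e ∈ A, let Γ be a natural number, and let 𝒴 be a nonempty finite family of subsets of A. Then max over c ∈ U(Γ) of (min over Y ∈ 𝒴 of ∑_{e∈Y} c_e) equals max over c ∈ Û(Γ) of (min over Y ∈ 𝒴 of ∑_{e∈Y} c_e); in particular, the maximum over U(Γ) is attained at an extreme scenario in Û(Γ). -/
/-- Observation 1 of the paper.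
Given a finite set `A` of arcs, nominal second-stage costs `chat e ≥ 0` and
deviations `Δ e ≥ 0`, a discrete budget `Γ`, the discrete budgeted uncertainty
set is `U = {c | chat e ≤ c e ≤ chat e + Δ e for all e, |{e | c e > chat e}| ≤ Γ}`
and its extreme-point subset is
`Uhat = {c ∈ U | c e ∈ {chat e, chat e + Δ e} for all e}`.
For any nonempty finite family `𝒴` of subsets of `A`, with
`g c = min_{Y ∈ 𝒴} ∑_{e ∈ Y} c e`, we have
`max_{c ∈ U} g c = max_{c ∈ Uhat} g c`, and the maximum over `U` is attained
at an extreme scenario belonging to `Uhat`. -/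
theorem stmt0 {A : Type*} [Fintype A] (chat Δ : A → ℝ)
    (hchat : ∀ e, 0 ≤ chat e) (hΔ : ∀ e, 0 ≤ Δ e) (Γ : ℕ)
    (𝒴 : Finset (Finset A)) (h𝒴 : 𝒴.Nonempty)
    (U : Set (A → ℝ))
    (hU : U = { c | (∀ e, chat e ≤ c e ∧ c e ≤ chat e + Δ e) ∧
                    { e | chat e < c e }.ncard ≤ Γ })
    (Uhat : Set (A → ℝ))
    (hUhat : Uhat = { c ∈ U | ∀ e, c e = chat e ∨ c e = chat e + Δ e })
    (g : (A → ℝ) → ℝ)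
    (hg : g = fun c => sInf ((fun Y : Finset A => ∑ e ∈ Y, c e) '' (↑𝒴 : Set (Finset A)))) :
    sSup (g '' U) = sSup (g '' Uhat) ∧ ∃ c ∈ Uhat, IsGreatest (g '' U) (g c) := by
  -- basic facts about g
  set S : (A → ℝ) → Set ℝ := fun c => (fun Y : Finset A => ∑ e ∈ Y, c e) '' (↑𝒴 : Set (Finset A))
    with hS
  have hSfin : ∀ c, (S c).Finite := fun c => (𝒴.finite_toSet).image _
  have hSne : ∀ c, (S c).Nonempty := fun c => (Set.image_nonempty).mpr (by exact_mod_cast h𝒴)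
  have hgmem : ∀ c, g c ∈ S c := by
    intro c; rw [hg]; exact (hSne c).csInf_mem (hSfin c)
  have hgle : ∀ c, ∀ Y ∈ 𝒴, g c ≤ ∑ e ∈ Y, c e := by
    intro c Y hY; rw [hg]
    exact csInf_le (hSfin c).bddBelow ⟨Y, by exact_mod_cast hY, rfl⟩
  have hmono : ∀ c c' : A → ℝ, (∀ e, c e ≤ c' e) → g c ≤ g c' := by
    intro c c' h
    obtain ⟨Y, hY, hYeq⟩ := hgmem c'
    calc g c ≤ ∑ e ∈ Y, c e := hgle c Y (by exact_mod_cast hY)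
      _ ≤ ∑ e ∈ Y, c' e := Finset.sum_le_sum (fun e _ => h e)
      _ = g c' := hYeq
  -- chat ∈ Uhat
  have hchatU : chat ∈ U := by
    rw [hU]
    refine ⟨fun e => ⟨le_refl _, le_add_of_nonneg_right (hΔ e)⟩, ?_⟩
    simp
  have hchatUhat : chat ∈ Uhat := by
    rw [hUhat]; exact ⟨hchatU, fun e => Or.inl rfl⟩
  have hUhatsubU : Uhat ⊆ U := by rw [hUhat]; exact fun c hc => hc.1
  -- rounding
  have hround : ∀ c ∈ U, ∃ c' ∈ Uhat, ∀ e, c e ≤ c' e := by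
    intro c hc
    rw [hU] at hc
    refine ⟨fun e => if chat e < c e then chat e + Δ e else chat e, ?_, ?_⟩
    · rw [hUhat]
      constructor
      · rw [hU]
        constructor
        · intro e
          by_cases h : chat e < c e <;> simp [h, hΔ e]
        · refine le_trans (Set.ncard_le_ncard ?_ (Set.toFinite _)) hc.2
          intro e he
          simp only [Set.mem_setOf_eq] at he ⊢
          by_contra h
          simp [h] at he
      · intro e
        by_cases h : chat e < c e <;> simp [h]
    · intro e
      by_cases h : chat e < c e
      · simpa [h] using (hc.1 e).2
      · simp only [h, if_false]
        exact le_of_not_gt h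
  -- Uhat is finite
  have hUhatfin : Uhat.Finite := by
    have : Uhat ⊆ Set.pi Set.univ (fun e => ({chat e, chat e + Δ e} : Set ℝ)) := by
      intro c hc e _
      rw [hUhat] at hc
      rcases hc.2 e with h | h <;> simp [h]
    exact (Set.Finite.pi (fun e => (Set.finite_singleton _).insert _)).subset this
  have himgfin : (g '' Uhat).Finite := hUhatfin.image g
  have himgne : (g '' Uhat).Nonempty := ⟨g chat, chat, hchatUhat, rfl⟩
  -- greatest element of g '' Uhat
  have hmmem : sSup (g '' Uhat) ∈ g '' Uhat := himgne.csSup_mem himgfin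
  obtain ⟨cstar, hcstar, hcstareq⟩ := hmmem
  have hgreatUhat : IsGreatest (g '' Uhat) (g cstar) := by
    rw [hcstareq]
    exact ⟨⟨cstar, hcstar, hcstareq⟩, fun y hy => le_csSup himgfin.bddAbove hy⟩
  have hgreatU : IsGreatest (g '' U) (g cstar) := by
    constructor
    · exact ⟨cstar, hUhatsubU hcstar, rfl⟩
    · rintro y ⟨c, hcU, rfl⟩
      obtain ⟨c', hc', hle⟩ := hround c hcU
      exact le_trans (hmono c c' hle) (hgreatUhat.2 ⟨c', hc', rfl⟩)
  exact ⟨by rw [hgreatU.csSup_eq,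
      hgreatUhat.csSup_eq], cstar, hcstar, hgreatU⟩
end

section
/- Let G=(V,A) be a directed graph with distinguished nodes s,t such that the set Φ of simple s–t paths is nonempty, let X ∈ Φ, let k ≥ 0 be an integer, and let Φ(X,k) be any one of the three neighborhoods Φ^incl(X,k), Φ^excl(X,k), Φ^sym(X,k). Let ĉ_e ≥ 0, Δ_e ≥ 0 (e ∈ A) and budget Γ define the uncertainty set U(Γ), and let v* := max_{c∈U(Γ)} min_{Y∈Φ(X,k)} ∑_{e∈Y} c_e be the adversarial value of X. Define first-stage costs C_e := 0 for e ∈ X and C_e := M for e ∉ X, where M > v*. Then min over X' ∈ Φ of ( ∑_{e∈X'} C_e + max_{c∈U(Γ)} min_{Y∈Φ(X',k)} ∑_{e∈Y} c_e ) = v*, and the minimum is attained at X' = X. Hence the adversarial problem Adv SP is a special case of the recoverable robust problem Rec Rob SP. -/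
namespace RRSP1

/-- A simple directed `s`–`t` path in the digraph with arc set `A`, given as the
list of its (pairwise distinct) vertices. -/
def IsPath {V : Type*} (A : Set (V × V)) (s t : V) (p : List V) : Prop :=
  List.Chain' (fun u v => (u, v) ∈ A) p ∧ p.head? = some s ∧ p.getLast? = some t ∧ p.Nodup

/-- The set of arcs of a path given by its vertex list. -/
def pathArcs {V : Type*} [DecidableEq V] (p : List V) : Finset (V × V) :=
  (p.zip p.tail).toFinset

/-- `Φ`: the set of all simple `s`–`t` paths, each identified with its arc set. -/
def Phi {V : Type*} [DecidableEq V] (A : Set (V × V)) (s t : V) : Set (Finset (V × V)) :=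
  { X | ∃ p : List V, IsPath A s t p ∧ pathArcs p = X }

/-- The arc inclusion neighborhood `Φ^incl(X,k)`. -/
def PhiIncl {V : Type*} [DecidableEq V] (A : Set (V × V)) (s t : V)
    (X : Finset (V × V)) (k : ℕ) : Set (Finset (V × V)) :=
  { Y ∈ Phi A s t | (Y \ X).card ≤ k }

/-- The arc exclusion neighborhood `Φ^excl(X,k)`. -/
def PhiExcl {V : Type*} [DecidableEq V] (A : Set (V × V)) (s t : V)
    (X : Finset (V × V)) (k : ℕ) : Set (Finset (V × V)) :=
  { Y ∈ Phi A s t | (X \ Y).card ≤ k }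

/-- The arc symmetric difference neighborhood `Φ^sym(X,k)`. -/
def PhiSym {V : Type*} [DecidableEq V] (A : Set (V × V)) (s t : V)
    (X : Finset (V × V)) (k : ℕ) : Set (Finset (V × V)) :=
  { Y ∈ Phi A s t | ((Y \ X) ∪ (X \ Y)).card ≤ k }

/-- The discrete budgeted uncertainty set `U(Γ)` on the arcs of `A`. -/
def U {V : Type*} (A : Set (V × V)) (chat Δ : V × V → ℝ) (Γ : ℕ) :
    Set ((V × V) → ℝ) :=
  { c | (∀ e ∈ A, chat e ≤ c e ∧ c e ≤ chat e + Δ e) ∧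
        { e ∈ A | chat e < c e }.ncard ≤ Γ }

/-- `min_{Y ∈ Nk} ∑_{e ∈ Y} c e`: the incremental value. -/
noncomputable def incVal {V : Type*} (Nk : Set (Finset (V × V))) (c : (V × V) → ℝ) : ℝ :=
  sInf ((fun Y => ∑ e ∈ Y, c e) '' Nk)

/-- `max_{c ∈ U} min_{Y ∈ Nk} ∑_{e ∈ Y} c e`: the adversarial value. -/
noncomputable def advVal {V : Type*} (Nk : Set (Finset (V × V)))
    (U : Set ((V × V) → ℝ)) : ℝ :=
  sSup ((incVal Nk) '' U)

/-!
A simple path whose arcs all lie on another simple path with the same endpoints is that path: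
no vertex recurs, so from each vertex both paths leave along the same arc. Hence every path
`X' ≠ X` uses an arc outside `X` and pays at least `M > v*` in first-stage cost, while
adversarial values are nonnegative because all costs are; `X` itself pays nothing.
-/

@[simp]
lemma pathArcs_cons_cons {V : Type*} [DecidableEq V] (a b : V) (l : List V) :
    pathArcs (a :: b :: l) = insert (a, b) (pathArcs (b :: l)) := by
  simp [pathArcs]

lemma fst_mem_of_mem_pathArcs {V : Type*} [DecidableEq V] {p : List V} {e : V × V}
    (h : e ∈ pathArcs p) : e.1 ∈ p :=
  (List.of_mem_zip (List.mem_toFinset.mp h)).1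

lemma mem_pathArcs_of_fst_ne {V : Type*} [DecidableEq V] {a b : V} {l : List V} {e : V × V}
    (h : e ∈ pathArcs (a :: b :: l)) (hne : e.1 ≠ a) : e ∈ pathArcs (b :: l) := by
  rw [pathArcs_cons_cons, Finset.mem_insert] at h
  exact h.resolve_left fun he => hne (by rw [he])

lemma coe_pathArcs_subset {V : Type*} [DecidableEq V] {A : Set (V × V)} :
    ∀ {p : List V}, List.IsChain (fun u v => (u, v) ∈ A) p → ↑(pathArcs p) ⊆ A
  | [], _ => by simp [pathArcs]
  | [_], _ => by simp [pathArcs]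
  | a :: b :: l, hp => by
    obtain ⟨hab, hl⟩ := List.isChain_cons_cons.mp hp
    simpa [Set.insert_subset_iff] using ⟨hab, coe_pathArcs_subset hl⟩

lemma eq_of_pathArcs_subset {V : Type*} [DecidableEq V] :
    ∀ {q p : List V}, q.Nodup → p.Nodup → q.head? = p.head? → q.getLast? = p.getLast? →
      pathArcs q ⊆ pathArcs p → q = p
  | [], p, _, _, hh, _, _ => (List.head?_eq_none_iff.mp hh.symm).symm
  | [a], [], _, _, hh, _, _ => by simp at hh
  | [a], x :: xs, _, hp, hh, hl, _ => by
    obtain rfl : x = a := by simpa using hh.symm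
    cases xs with
    | nil => rfl
    | cons y ys =>
      have hlast : (y :: ys).getLast? = some x := by simpa using hl.symm
      exact absurd (List.mem_of_getLast? hlast) (List.nodup_cons.mp hp).1
  | a :: b :: q, [], _, _, hh, _, _ => by simp at hh
  | a :: b :: q, x :: xs, hq, hp, hh, hl, hsub => by
    obtain rfl : x = a := by simpa using hh.symm
    have hxq := (List.nodup_cons.mp hq).1
    have hxp := (List.nodup_cons.mp hp).1
    have hab : (x, b) ∈ pathArcs (x :: xs) := hsub (by simp)
    -- the only arc of `x :: xs` leaving `x` is its first one, as `x` does not reappear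
    cases xs with
    | nil => simp [pathArcs] at hab
    | cons y ys =>
      obtain rfl : y = b := by
        rw [pathArcs_cons_cons, Finset.mem_insert] at hab
        rcases hab with hab | hab
        · exact (Prod.mk.inj hab).2.symm
        · exact absurd (fst_mem_of_mem_pathArcs hab) hxp
      have hsub' : pathArcs (y :: q) ⊆ pathArcs (y :: ys) := fun e he =>
        mem_pathArcs_of_fst_ne (hsub (by simp [he]))
          fun h => hxq (h ▸ fst_mem_of_mem_pathArcs he)
      rw [eq_of_pathArcs_subset (List.nodup_cons.mp hq).2 (List.nodup_cons.mp hp).2 rfl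
        (by simpa using hl) hsub']
  termination_by q => q.length

namespace Phi

variable {V : Type*} [DecidableEq V] {A : Set (V × V)} {s t : V} {X Y : Finset (V × V)}

lemma coe_subset (hX : X ∈ Phi A s t) : ↑X ⊆ A := by
  obtain ⟨p, hp, rfl⟩ := hX
  exact coe_pathArcs_subset hp.1

lemma eq_of_subset (hY : Y ∈ Phi A s t) (hX : X ∈ Phi A s t) (hYX : Y ⊆ X) : Y = X := by
  obtain ⟨q, ⟨-, hqs, hqt, hq⟩, rfl⟩ := hY
  obtain ⟨p, ⟨-, hps, hpt, hp⟩, rfl⟩ := hX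
  rw [eq_of_pathArcs_subset hq hp (hqs.trans hps.symm) (hqt.trans hpt.symm) hYX]

end Phi

lemma incVal_nonneg {V : Type*} {Nk : Set (Finset (V × V))} {c : V × V → ℝ}
    (hc : ∀ Y ∈ Nk, ∀ e ∈ Y, 0 ≤ c e) : 0 ≤ incVal Nk c :=
  Real.sInf_nonneg <| by
    rintro _ ⟨Y, hY, rfl⟩
    exact Finset.sum_nonneg (hc Y hY)

lemma advVal_nonneg {V : Type*} {Nk : Set (Finset (V × V))} {U : Set (V × V → ℝ)}
    (hU : ∀ c ∈ U, 0 ≤ incVal Nk c) : 0 ≤ advVal Nk U :=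
  Real.sSup_nonneg <| by
    rintro _ ⟨c, hc, rfl⟩
    exact hU c hc

lemma advVal_U_nonneg {V : Type*} [DecidableEq V] {A : Set (V × V)} {s t : V}
    {Nk : Set (Finset (V × V))} (hNk : Nk ⊆ Phi A s t) {chat Δ : V × V → ℝ}
    (hchat : ∀ e, 0 ≤ chat e) (Γ : ℕ) : 0 ≤ advVal Nk (U A chat Δ Γ) :=
  advVal_nonneg fun _ hc => incVal_nonneg fun _ hY e he =>
    (hchat e).trans (hc.1 e (Phi.coe_subset (hNk hY) he)).1

theorem stmt1_general {V : Type*} [DecidableEq V]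
    (A : Set (V × V)) (s t : V)
    (X : Finset (V × V)) (hX : X ∈ Phi A s t) (k Γ : ℕ)
    (chat Δ : V × V → ℝ) (hchat : ∀ e, 0 ≤ chat e)
    (N : Finset (V × V) → Set (Finset (V × V)))
    (hN : N = (fun X' => PhiIncl A s t X' k) ∨
          N = (fun X' => PhiExcl A s t X' k) ∨
          N = (fun X' => PhiSym A s t X' k))
    (M : ℝ) (hM : advVal (N X) (U A chat Δ Γ) < M)
    (C : V × V → ℝ) (hC : C = fun e => if e ∈ X then 0 else M) :
    (∑ e ∈ X, C e) + advVal (N X) (U A chat Δ Γ) = advVal (N X) (U A chat Δ Γ) ∧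
    IsLeast ((fun X' => (∑ e ∈ X', C e) + advVal (N X') (U A chat Δ Γ)) '' Phi A s t)
      (advVal (N X) (U A chat Δ Γ)) := by
  have hNΦ (X' : Finset (V × V)) : N X' ⊆ Phi A s t := by
    rcases hN with rfl | rfl | rfl <;> exact fun Y hY => hY.1
  have hv (X' : Finset (V × V)) := advVal_U_nonneg (hNΦ X') (Δ := Δ) hchat Γ
  have hCX : ∑ e ∈ X, C e = 0 := Finset.sum_eq_zero fun e he => by simp [hC, he]
  have hC0 (e : V × V) : 0 ≤ C e := by
    rw [hC]; dsimp only; split_ifs <;> linarith [hv X]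
  refine ⟨by rw [hCX, zero_add], ⟨X, hX, by simp only [hCX, zero_add]⟩, ?_⟩
  rintro _ ⟨X', hX', rfl⟩
  by_cases hsub : X' ⊆ X
  · rw [Phi.eq_of_subset hX' hX hsub]
    simp only [hCX, zero_add, le_refl]
  · obtain ⟨e, heX', heX⟩ := Finset.not_subset.mp hsub
    have hMle : M ≤ ∑ e ∈ X', C e := by
      simpa [hC, heX] using Finset.single_le_sum (fun i _ => hC0 i) heX'
    linarith [hv X']

/-- Let `X ∈ Φ`, let `N X'` be one of the three neighborhoods
`Φ^incl(X',k)`, `Φ^excl(X',k)`, `Φ^sym(X',k)`, let `v* = advVal (N X) (U (Γ))`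
be the adversarial value of `X`, and define first-stage costs `C e = 0` for
`e ∈ X` and `C e = M` otherwise, where `M > v*`.  Then the minimum over
`X' ∈ Φ` of `∑_{e ∈ X'} C e + max_{c ∈ U(Γ)} min_{Y ∈ N X'} ∑_{e ∈ Y} c e`
equals `v*` and is attained at `X' = X`.  Hence the adversarial problem is a
special case of the recoverable robust problem. -/
theorem stmt1 {V : Type*} [Fintype V] [DecidableEq V]
    (A : Set (V × V)) (s t : V)
    (hΦ : (Phi A s t).Nonempty)
    (X : Finset (V × V)) (hX : X ∈ Phi A s t) (k Γ : ℕ)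
    (chat Δ : V × V → ℝ) (hchat : ∀ e, 0 ≤ chat e) (hΔ : ∀ e, 0 ≤ Δ e)
    (N : Finset (V × V) → Set (Finset (V × V)))
    (hN : N = (fun X' => PhiIncl A s t X' k) ∨
          N = (fun X' => PhiExcl A s t X' k) ∨
          N = (fun X' => PhiSym A s t X' k))
    (M : ℝ) (hM : advVal (N X) (U A chat Δ Γ) < M)
    (C : V × V → ℝ) (hC : C = fun e => if e ∈ X then 0 else M) :
    (∑ e ∈ X, C e) + advVal (N X) (U A chat Δ Γ) = advVal (N X) (U A chat Δ Γ) ∧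
    IsLeast ((fun X' => (∑ e ∈ X', C e) + advVal (N X') (U A chat Δ Γ)) '' Phi A s t)
      (advVal (N X) (U A chat Δ Γ)) :=
  stmt1_general A s t X hX k Γ chat Δ hchat N hN M hM C hC

end RRSP1
end
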